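/- arXiv:1512.02254 — 4 statements merged into one kernel-verified Lean document; each statement's English description precedes it below -/
import Mathlib

section
/- Let M be a matroid on ground set V of size n with rank function r, and let x be a point in the matroid independent-set polytope P(M) = {x ∈ ℝ^n : x(S) ≤ r(S) for all S ⊆ V, x ≥ 0} with 0 < x_i < 1 for all i. Then any collection of linearly independent tight rank constraints (sets T with x(T) = r(T)) has size at most n/2. -/
open Finset

section Aux
variable {n : ℕ} {M : Matroid (Fin n)} {r : Finset (Fin n) → ℕ}

theorem myrank_le (hr : ∀ S : Finset (Fin n),
      IsGreatest {c : ℕ | ∃ I : Finset (Fin n), I ⊆ S ∧ M.Indep ↑I ∧ I.card = c} (r S))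
    (S I : Finset (Fin n)) (hIS : I ⊆ S) (hI : M.Indep ↑I) : I.card ≤ r S :=
  (hr S).2 ⟨I, hIS, hI, rfl⟩

theorem myrank_mono (hr : ∀ S : Finset (Fin n),
      IsGreatest {c : ℕ | ∃ I : Finset (Fin n), I ⊆ S ∧ M.Indep ↑I ∧ I.card = c} (r S))
    {A B : Finset (Fin n)} (hAB : A ⊆ B) : r A ≤ r B := by
  obtain ⟨I, hIA, hI, hIc⟩ := (hr A).1
  have := myrank_le hr B I (hIA.trans hAB) hI
  omega

theorem myrank_empty (hr : ∀ S : Finset (Fin n),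
      IsGreatest {c : ℕ | ∃ I : Finset (Fin n), I ⊆ S ∧ M.Indep ↑I ∧ I.card = c} (r S)) :
    r ∅ = 0 := by
  obtain ⟨I, hI0, -, hIc⟩ := (hr ∅).1
  rw [← hIc, Finset.subset_empty.mp hI0, Finset.card_empty]

theorem myrank_ext (hr : ∀ S : Finset (Fin n),
      IsGreatest {c : ℕ | ∃ I : Finset (Fin n), I ⊆ S ∧ M.Indep ↑I ∧ I.card = c} (r S))
    (S : Finset (Fin n)) :
    ∀ (k : ℕ) (I : Finset (Fin n)), r S - I.card ≤ k → I ⊆ S → M.Indep ↑I →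
      ∃ J, I ⊆ J ∧ J ⊆ S ∧ M.Indep ↑J ∧ J.card = r S := by
  intro k
  induction k with
  | zero =>
    intro I hk hIS hI
    exact ⟨I, Finset.Subset.rfl, hIS, hI,
      le_antisymm (myrank_le hr S I hIS hI) (by omega)⟩
  | succ k ih =>
    intro I hk hIS hI
    by_cases hcard : r S ≤ I.card
    · exact ⟨I, Finset.Subset.rfl, hIS, hI, le_antisymm (myrank_le hr S I hIS hI) hcard⟩
    · obtain ⟨K, hKS, hK, hKc⟩ := (hr S).1
      have hlt : (↑I : Set (Fin n)).encard < (↑K : Set (Fin n)).encard := by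
        rw [Set.encard_coe_eq_coe_finsetCard, Set.encard_coe_eq_coe_finsetCard]
        exact_mod_cast (by omega : I.card < K.card)
      obtain ⟨e, he, hIe⟩ := hI.augment hK hlt
      have heI : e ∉ I := by simpa using he.2
      have heS : e ∈ S := hKS (by simpa using he.1)
      have hins : M.Indep ↑(insert e I) := by rw [Finset.coe_insert]; exact hIe
      obtain ⟨J, hIJ, hJS, hJ, hJc⟩ := ih (insert e I)
        (by rw [Finset.card_insert_of_notMem heI]; omega)
        (Finset.insert_subset heS hIS) hins
      exact ⟨J, (Finset.subset_insert e I).trans hIJ, hJS, hJ, hJc⟩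

theorem myrank_submod (hr : ∀ S : Finset (Fin n),
      IsGreatest {c : ℕ | ∃ I : Finset (Fin n), I ⊆ S ∧ M.Indep ↑I ∧ I.card = c} (r S))
    (A B : Finset (Fin n)) : r (A ∪ B) + r (A ∩ B) ≤ r A + r B := by
  classical
  obtain ⟨I, hIint, hI, hIc⟩ := (hr (A ∩ B)).1
  obtain ⟨J, hIJ, hJU, hJ, hJc⟩ := myrank_ext hr (A ∪ B) (r (A ∪ B)) I (by omega)
    (hIint.trans (by intro a ha; simp only [Finset.mem_inter] at ha
                     exact Finset.mem_union_left _ ha.1)) hI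
  have h1 : (J ∩ A).card ≤ r A :=
    myrank_le hr A _ Finset.inter_subset_right
      (hJ.subset (by rw [Finset.coe_inter]; exact Set.inter_subset_left))
  have h2 : (J ∩ B).card ≤ r B :=
    myrank_le hr B _ Finset.inter_subset_right
      (hJ.subset (by rw [Finset.coe_inter]; exact Set.inter_subset_left))
  have e1 : (J ∩ A) ∪ (J ∩ B) = J := by
    rw [← Finset.inter_union_distrib_left]
    exact Finset.inter_eq_left.mpr hJU
  have e2 : (J ∩ A) ∩ (J ∩ B) = J ∩ (A ∩ B) := by ext a; simp; tauto
  have e3 : r (A ∩ B) ≤ (J ∩ (A ∩ B)).card := by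
    rw [← hIc]
    exact Finset.card_le_card (Finset.subset_inter hIJ hIint)
  have e4 := Finset.card_union_add_card_inter (J ∩ A) (J ∩ B)
  rw [e1, e2] at e4
  omega

end Aux


def myTight {n : ℕ} (r : Finset (Fin n) → ℕ) (x : Fin n → ℝ) (S : Finset (Fin n)) : Prop :=
  ∑ i ∈ S, x i = (r S : ℝ)


section Aux2
variable {n : ℕ} {r : Finset (Fin n) → ℕ} {x : Fin n → ℝ}

theorem myTight_empty (hr0 : r ∅ = 0) : myTight r x ∅ := by
  simp [myTight, hr0]

theorem myTight_union_inter
    (hsub : ∀ A B : Finset (Fin n), r (A ∪ B) + r (A ∩ B) ≤ r A + r B)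
    (hpoly : ∀ S : Finset (Fin n), ∑ i ∈ S, x i ≤ (r S : ℝ))
    {A B : Finset (Fin n)} (hA : myTight r x A) (hB : myTight r x B) :
    myTight r x (A ∪ B) ∧ myTight r x (A ∩ B) := by
  have hU := hpoly (A ∪ B)
  have hI := hpoly (A ∩ B)
  have hsum : (∑ i ∈ A ∪ B, x i) + ∑ i ∈ A ∩ B, x i = (∑ i ∈ A, x i) + ∑ i ∈ B, x i :=
    Finset.sum_union_inter
  have hs : ((r (A ∪ B) : ℝ)) + (r (A ∩ B) : ℝ) ≤ (r A : ℝ) + (r B : ℝ) := by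
    exact_mod_cast hsub A B
  unfold myTight at hA hB ⊢
  constructor <;> linarith

theorem myTight_sup
    (hsub : ∀ A B : Finset (Fin n), r (A ∪ B) + r (A ∩ B) ≤ r A + r B)
    (hpoly : ∀ S : Finset (Fin n), ∑ i ∈ S, x i ≤ (r S : ℝ)) (hr0 : r ∅ = 0)
    (G : Finset (Finset (Fin n))) (hG : ∀ T ∈ G, myTight r x T) :
    myTight r x (G.sup id) := by
  classical
  induction G using Finset.induction_on with
  | empty => simpa using myTight_empty hr0
  | @insert a s ha ih =>
    rw [Finset.sup_insert]
    exact (myTight_union_inter hsub hpoly (hG a (Finset.mem_insert_self a s))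
      (ih fun T hT => hG T (Finset.mem_insert_of_mem hT))).1

theorem myTight_inf
    (hsub : ∀ A B : Finset (Fin n), r (A ∪ B) + r (A ∩ B) ≤ r A + r B)
    (hpoly : ∀ S : Finset (Fin n), ∑ i ∈ S, x i ≤ (r S : ℝ))
    (G : Finset (Finset (Fin n))) (hne : G.Nonempty) (hG : ∀ T ∈ G, myTight r x T) :
    myTight r x (G.inf id) := by
  classical
  induction G using Finset.induction_on with
  | empty => exact absurd hne (by simp)
  | @insert a s ha ih =>
    rcases s.eq_empty_or_nonempty with rfl | hs
    · simpa using hG a (Finset.mem_insert_self a _)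
    · rw [Finset.inf_insert]
      exact (myTight_union_inter hsub hpoly (hG a (Finset.mem_insert_self a s))
        (ih hs fun T hT => hG T (Finset.mem_insert_of_mem hT))).2

end Aux2

open scoped Classical in
noncomputable def myCls {n : ℕ} (r : Finset (Fin n) → ℕ) (x : Fin n → ℝ) (i : Fin n) :
    Finset (Fin n) :=
  univ.filter (fun j => ∀ T, myTight r x T → (i ∈ T ↔ j ∈ T))

section Aux3
variable {n : ℕ} {r : Finset (Fin n) → ℕ} {x : Fin n → ℝ}

theorem mem_myCls {i j : Fin n} :
    j ∈ myCls r x i ↔ ∀ T, myTight r x T → (i ∈ T ↔ j ∈ T) := by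
  classical
  simp [myCls]

theorem myCls_self (i : Fin n) : i ∈ myCls r x i :=
  mem_myCls.2 fun _ _ => Iff.rfl

theorem myCls_eq {i j : Fin n} (hj : j ∈ myCls r x i) : myCls r x i = myCls r x j := by
  ext k
  rw [mem_myCls, mem_myCls]
  constructor <;> intro h T hT
  · exact ((mem_myCls.1 hj T hT).symm).trans (h T hT)
  · exact (mem_myCls.1 hj T hT).trans (h T hT)

theorem myCls_subset {i : Fin n} {T : Finset (Fin n)} (hT : myTight r x T) (hi : i ∈ T) :
    myCls r x i ⊆ T := fun j hj => (mem_myCls.1 hj T hT).1 hi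

theorem two_le_myCls_card
    (hsub : ∀ A B : Finset (Fin n), r (A ∪ B) + r (A ∩ B) ≤ r A + r B)
    (hpoly : ∀ S : Finset (Fin n), ∑ i ∈ S, x i ≤ (r S : ℝ)) (hr0 : r ∅ = 0)
    (hmono : ∀ {A B : Finset (Fin n)}, A ⊆ B → r A ≤ r B)
    (hx : ∀ i, 0 < x i ∧ x i < 1)
    {i : Fin n} {T₀ : Finset (Fin n)} (hT₀ : myTight r x T₀) (hiT₀ : i ∈ T₀) :
    2 ≤ (myCls r x i).card := by
  classical
  set F : Finset (Finset (Fin n)) := univ.filter (fun T => myTight r x T) with hF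
  set A : Finset (Fin n) := (F.filter (fun T => i ∈ T)).inf id with hA
  set B : Finset (Fin n) := (F.filter (fun T => i ∉ T)).sup id with hB
  have hmemA : ∀ j, j ∈ A ↔ ∀ T, myTight r x T → i ∈ T → j ∈ T := by
    intro j
    rw [hA, ← Finset.singleton_subset_iff]
    show ({j} : Finset (Fin n)) ≤ (Finset.filter (fun T => i ∈ T) F).inf id ↔ _
    rw [Finset.le_inf_iff]
    simp [hF, Finset.singleton_subset_iff]
  have hmemB : ∀ j, j ∈ B ↔ ∃ T, myTight r x T ∧ i ∉ T ∧ j ∈ T := by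
    intro j
    rw [hB, Finset.mem_sup]
    simp only [hF, Finset.mem_filter, Finset.mem_univ, true_and, id]
    exact exists_congr fun T => and_assoc
  have htA : myTight r x A := by
    apply myTight_inf hsub hpoly
    · exact ⟨T₀, by simp [hF, hT₀, hiT₀]⟩
    · intro T hT
      simp [hF] at hT
      exact hT.1
  have htB : myTight r x B := by
    apply myTight_sup hsub hpoly hr0
    intro T hT
    simp [hF] at hT
    exact hT.1
  have htD : myTight r x (A ∩ B) := (myTight_union_inter hsub hpoly htA htB).2
  have hiA : i ∈ A := (hmemA i).2 fun _ _ h => h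
  have hiB : i ∉ B := by
    rw [hmemB]
    rintro ⟨T, -, hiT, hiT'⟩
    exact hiT hiT'
  have hclsAB : myCls r x i = A \ B := by
    ext j
    rw [Finset.mem_sdiff, hmemA, hmemB, mem_myCls]
    constructor
    · intro h
      exact ⟨fun T hT => (h T hT).1, fun ⟨T, hT, hiT, hjT⟩ => hiT ((h T hT).2 hjT)⟩
    · rintro ⟨h1, h2⟩ T hT
      exact ⟨h1 T hT, fun hj => by_contra fun hi => h2 ⟨T, hT, hi, hj⟩⟩
  by_contra hlt
  push_neg at hlt
  have hone : myCls r x i = {i} := by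
    have h1 : 1 ≤ (myCls r x i).card := Finset.card_pos.2 ⟨i, myCls_self i⟩
    have : (myCls r x i).card = 1 := by omega
    obtain ⟨a, ha⟩ := Finset.card_eq_one.1 this
    rw [ha]
    have := myCls_self (r := r) (x := x) i
    rw [ha, Finset.mem_singleton] at this
    rw [this]
  have hABi : A \ B = {i} := by rw [← hclsAB, hone]
  have hAD : A = insert i (A ∩ B) := by
    ext a
    simp only [Finset.mem_insert, Finset.mem_inter]
    constructor
    · intro ha
      by_cases hb : a ∈ B
      · exact Or.inr ⟨ha, hb⟩
      · left
        have : a ∈ A \ B := Finset.mem_sdiff.2 ⟨ha, hb⟩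
        rw [hABi, Finset.mem_singleton] at this
        exact this
    · rintro (rfl | ⟨ha, -⟩)
      · exact hiA
      · exact ha
  have hiD : i ∉ A ∩ B := fun h => hiB (Finset.mem_inter.1 h).2
  have hsumA : ∑ j ∈ A, x j = x i + ∑ j ∈ A ∩ B, x j := by
    conv_lhs => rw [hAD]
    rw [Finset.sum_insert hiD]
  have hrD : r (A ∩ B) ≤ r A := hmono Finset.inter_subset_left
  have hxi := hx i
  have heq : (r A : ℝ) = x i + (r (A ∩ B) : ℝ) := by
    rw [← htA, ← htD, hsumA]
  have hlt' : r (A ∩ B) < r A := by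
    have : (r (A ∩ B) : ℝ) < (r A : ℝ) := by linarith [hxi.1]
    exact_mod_cast this
  have : (r (A ∩ B) : ℝ) + 1 ≤ (r A : ℝ) := by exact_mod_cast hlt'
  linarith [hxi.2]

end Aux3

/-- At any strictly fractional point of the matroid independent-set polytope,
any linearly independent collection of tight rank constraints has size at most `n/2`. -/
theorem stmt_0 (n : ℕ) (M : Matroid (Fin n)) (hE : M.E = Set.univ)
    (r : Finset (Fin n) → ℕ)
    (hr : ∀ S : Finset (Fin n),
      IsGreatest {c : ℕ | ∃ I : Finset (Fin n), I ⊆ S ∧ M.Indep ↑I ∧ I.card = c} (r S))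
    (x : Fin n → ℝ) (hx : ∀ i, 0 < x i ∧ x i < 1)
    (hpoly : ∀ S : Finset (Fin n), ∑ i ∈ S, x i ≤ (r S : ℝ))
    (𝒯 : Finset (Finset (Fin n)))
    (htight : ∀ T ∈ 𝒯, ∑ i ∈ T, x i = (r T : ℝ))
    (hind : LinearIndependent ℝ
      (fun T : {T // T ∈ 𝒯} => fun i => if i ∈ (T : Finset (Fin n)) then (1 : ℝ) else 0)) :
    2 * 𝒯.card ≤ n := by
  classical
  have hr0 : r ∅ = 0 := myrank_empty hr
  have hsub := myrank_submod hr
  have hmono : ∀ {A B : Finset (Fin n)}, A ⊆ B → r A ≤ r B := fun h => myrank_mono hr h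
  have hT𝒯 : ∀ T ∈ 𝒯, myTight r x T := htight
  set 𝒮 : Finset (Finset (Fin n)) :=
    (univ.filter (fun i => ∃ T ∈ 𝒯, i ∈ T)).image (myCls r x) with h𝒮
  have hcard2 : ∀ C ∈ 𝒮, 2 ≤ C.card := by
    intro C hC
    obtain ⟨i, hi, rfl⟩ := Finset.mem_image.1 hC
    simp only [Finset.mem_filter, Finset.mem_univ, true_and] at hi
    obtain ⟨T, hT, hiT⟩ := hi
    exact two_le_myCls_card hsub hpoly hr0 hmono hx (hT𝒯 T hT) hiT
  have hdisj : ∀ C1 ∈ 𝒮, ∀ C2 ∈ 𝒮, C1 ≠ C2 → Disjoint (id C1) (id C2) := by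
    intro C1 h1 C2 h2 hne
    obtain ⟨i, -, rfl⟩ := Finset.mem_image.1 h1
    obtain ⟨j, -, rfl⟩ := Finset.mem_image.1 h2
    rw [id, id, Finset.disjoint_left]
    intro k hk1 hk2
    exact hne ((myCls_eq hk1).trans (myCls_eq hk2).symm)
  have hsum : 2 * 𝒮.card ≤ n := by
    have h1 : ∑ C ∈ 𝒮, 2 ≤ ∑ C ∈ 𝒮, C.card := Finset.sum_le_sum hcard2
    have h2 : (𝒮.biUnion id).card = ∑ C ∈ 𝒮, C.card := Finset.card_biUnion hdisj
    have h3 : (𝒮.biUnion id).card ≤ n := le_trans (Finset.card_le_univ _) (by simp)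
    simp only [Finset.sum_const, smul_eq_mul] at h1
    omega
  set χ : Finset (Fin n) → (Fin n → ℝ) := fun S i => if i ∈ S then (1 : ℝ) else 0 with hχ
  have hspan : ∀ T ∈ 𝒯, χ T = ∑ C ∈ 𝒮.filter (· ⊆ T), χ C := by
    intro T hT
    funext i
    rw [Finset.sum_apply]
    by_cases hiT : i ∈ T
    · have hmem : myCls r x i ∈ 𝒮.filter (· ⊆ T) := Finset.mem_filter.2
        ⟨Finset.mem_image.2 ⟨i, Finset.mem_filter.2 ⟨Finset.mem_univ i, ⟨T, hT, hiT⟩⟩, rfl⟩,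
         myCls_subset (hT𝒯 T hT) hiT⟩
      rw [Finset.sum_eq_single_of_mem (myCls r x i) hmem ?side]
      · simp [hχ, hiT, myCls_self i]
      case side =>
        intro C hC hne
        obtain ⟨j, -, rfl⟩ := Finset.mem_image.1 (Finset.mem_filter.1 hC).1
        simp only [hχ]
        rw [if_neg]
        intro hiC
        exact hne (myCls_eq hiC)
    · rw [Finset.sum_eq_zero ?_]
      · simp [hχ, hiT]
      · intro C hC
        have hCT : C ⊆ T := by
          have := (Finset.mem_filter.1 hC).2
          exact this
        simp only [hχ]
        exact if_neg (fun h => hiT (hCT h))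
  have hmemW : ∀ T ∈ 𝒯,
      χ T ∈ Submodule.span ℝ ((𝒮.image χ : Finset (Fin n → ℝ)) : Set (Fin n → ℝ)) := by
    intro T hT
    rw [hspan T hT]
    refine Submodule.sum_mem _ fun C hC => Submodule.subset_span ?_
    simp only [Finset.coe_image, Set.mem_image, Finset.mem_coe]
    exact ⟨C, (Finset.mem_filter.1 hC).1, rfl⟩
  have hli : LinearIndependent ℝ (fun T : {T // T ∈ 𝒯} =>
      (⟨χ ↑T, hmemW ↑T T.2⟩ :
        Submodule.span ℝ ((𝒮.image χ : Finset (Fin n → ℝ)) : Set (Fin n → ℝ)))) := by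
    apply LinearIndependent.of_comp
      (Submodule.span ℝ ((𝒮.image χ : Finset (Fin n → ℝ)) : Set (Fin n → ℝ))).subtype
    exact hind
  have h1 := hli.fintype_card_le_finrank
  have h2 : Module.finrank ℝ
      (Submodule.span ℝ ((𝒮.image χ : Finset (Fin n → ℝ)) : Set (Fin n → ℝ))) ≤
      (𝒮.image χ).card := finrank_span_finset_le_card (𝒮.image χ)
  rw [Fintype.card_coe] at h1
  have h3 := Finset.card_image_le (s := 𝒮) (f := χ)
  omega
end

section
/- Let L be a laminar family of subsets of an n-element ground set, and let x ∈ ℝ^n with 0 < x_i < 1 for all i. Suppose each set T ∈ L has an integer requirement r_T and call T tight if x(T) = r_T. Then the characteristic vectors of the tight sets of L span a subspace of dimension at most n/2. -/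
open Finset

lemma laminar_count (n : ℕ) (x : Fin n → ℝ) (hx : ∀ i, 0 < x i ∧ x i < 1)
    (r : Finset (Fin n) → ℤ) (B : Finset (Finset (Fin n)))
    (hlam : ∀ A ∈ B, ∀ C ∈ B, A ⊆ C ∨ C ⊆ A ∨ Disjoint A C)
    (htight : ∀ S ∈ B, ∑ i ∈ S, x i = (r S : ℝ))
    (hind : ∀ S ∈ B, (fun i => if i ∈ S then (1:ℝ) else 0) ∉
        Submodule.span ℝ ((fun T : Finset (Fin n) => fun i => if i ∈ T then (1:ℝ) else 0) ''
          (↑(B.erase S)))) :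
    2 * B.card ≤ n := by
  classical
  set D : Finset (Fin n) → Finset (Fin n) :=
    fun S => S \ (B.filter (fun C => C ⊂ S)).biUnion id with hD
  have hDsub : ∀ S, D S ⊆ S := fun S => sdiff_subset
  have hdisj : ∀ S ∈ B, ∀ S' ∈ B, S ≠ S' → Disjoint (D S) (D S') := by
    have key : ∀ S ∈ B, ∀ S' ∈ B, S ⊂ S' → Disjoint (D S) (D S') := by
      intro S hS S' hS' hss
      rw [Finset.disjoint_left]
      intro a haS haS'
      have : a ∈ (B.filter (fun C => C ⊂ S')).biUnion id :=
        Finset.mem_biUnion.mpr ⟨S, Finset.mem_filter.mpr ⟨hS, hss⟩, hDsub S haS⟩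
      exact (Finset.mem_sdiff.mp haS').2 this
    intro S hS S' hS' hne
    rcases hlam S hS S' hS' with h | h | h
    · exact key S hS S' hS' (ssubset_of_subset_of_ne h hne)
    · exact (key S' hS' S hS (ssubset_of_subset_of_ne h hne.symm)).symm
    · exact h.mono (hDsub S) (hDsub S')
  have hcard : ∀ S ∈ B, 2 ≤ (D S).card := by
    intro S hS
    set P := B.filter (fun C => C ⊂ S) with hP
    set Ch := P.filter (fun C => ∀ C' ∈ P, C ⊆ C' → C = C') with hCh
    have hChP : Ch ⊆ P := Finset.filter_subset _ _
    have hPB : P ⊆ B := Finset.filter_subset _ _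
    have hPS : ∀ C ∈ P, C ⊂ S := fun C hC => (Finset.mem_filter.mp hC).2
    have hUnion : P.biUnion id = Ch.biUnion id := by
      apply Finset.Subset.antisymm
      · intro a ha
        obtain ⟨C, hC, haC⟩ := Finset.mem_biUnion.mp ha
        obtain ⟨M, hM, hMmax⟩ : ∃ M ∈ P.filter (fun C' => C ⊆ C'),
            ∀ y ∈ P.filter (fun C' => C ⊆ C'), ¬ M < y := by
          obtain ⟨M, hM⟩ := Finset.exists_maximal (s := P.filter (fun C' => C ⊆ C'))
            ⟨C, Finset.mem_filter.mpr ⟨hC, Finset.Subset.refl C⟩⟩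
          exact ⟨M, hM.prop, fun y hy hlt => hlt.not_ge (hM.2 hy hlt.le)⟩
        have hMP : M ∈ P := (Finset.mem_filter.mp hM).1
        have hCM : C ⊆ M := (Finset.mem_filter.mp hM).2
        refine Finset.mem_biUnion.mpr ⟨M, Finset.mem_filter.mpr ⟨hMP, ?_⟩, hCM haC⟩
        intro C' hC' hMC'
        by_contra hne
        exact hMmax C' (Finset.mem_filter.mpr ⟨hC', hCM.trans hMC'⟩)
          (lt_of_le_of_ne hMC' hne)
      · exact Finset.biUnion_subset_biUnion_of_subset_left _ hChP
    have hChdisj : (↑Ch : Set (Finset (Fin n))).PairwiseDisjoint id := by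
      intro C1 h1 C2 h2 hne
      simp only [Finset.mem_coe] at h1 h2
      have h1max := (Finset.mem_filter.mp h1).2
      have h2max := (Finset.mem_filter.mp h2).2
      rcases hlam C1 (hPB (hChP h1)) C2 (hPB (hChP h2)) with h | h | h
      · exact absurd (h1max C2 (hChP h2) h) hne
      · exact absurd (h2max C1 (hChP h1) h).symm hne
      · exact h
    have hChS : Ch.biUnion id ⊆ S := by
      intro a ha
      obtain ⟨C, hC, haC⟩ := Finset.mem_biUnion.mp ha
      exact (hPS C (hChP hC)).subset haC
    have hDS : D S = S \ Ch.biUnion id := by rw [hD]; simp only [← hP, hUnion]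
    have hsum : ∑ i ∈ D S, x i = ((r S - ∑ C ∈ Ch, r C : ℤ) : ℝ) := by
      rw [hDS, Finset.sum_sdiff_eq_sub hChS, Finset.sum_biUnion hChdisj, htight S hS]
      push_cast
      congr 1
      exact Finset.sum_congr rfl (fun C hC => htight C (hPB (hChP hC)))
    have hne : (D S).Nonempty := by
      rw [Finset.nonempty_iff_ne_empty]
      intro hempty
      have hSeq : S = Ch.biUnion id := by
        apply Finset.Subset.antisymm _ hChS
        intro a ha
        by_contra h
        have : a ∈ D S := hDS ▸ Finset.mem_sdiff.mpr ⟨ha, h⟩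
        simp [hempty] at this
      apply hind S hS
      have heq : (fun i => if i ∈ S then (1:ℝ) else 0)
          = ∑ C ∈ Ch, (fun i => if i ∈ C then (1:ℝ) else 0) := by
        funext i
        rw [Finset.sum_apply]
        by_cases hi : i ∈ S
        · rw [if_pos hi]
          obtain ⟨C0, hC0, hiC0⟩ := Finset.mem_biUnion.mp (hSeq ▸ hi)
          rw [Finset.sum_eq_single_of_mem C0 hC0]
          · rw [if_pos (show i ∈ C0 from hiC0)]
          · intro C hC hCne
            rw [if_neg]
            intro hiC
            exact (Finset.disjoint_left.mp (hChdisj (Finset.mem_coe.mpr hC)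
              (Finset.mem_coe.mpr hC0) hCne) hiC) hiC0
        · rw [if_neg hi]
          symm
          apply Finset.sum_eq_zero
          intro C hC
          rw [if_neg]
          intro hiC
          exact hi (hChS (Finset.mem_biUnion.mpr ⟨C, hC, hiC⟩))
      rw [heq]
      apply Submodule.sum_mem
      intro C hC
      apply Submodule.subset_span
      refine ⟨C, ?_, rfl⟩
      simp only [Finset.coe_erase, Set.mem_diff, Finset.mem_coe, Set.mem_singleton_iff]
      exact ⟨hPB (hChP hC), (hPS C (hChP hC)).ne⟩
    have hpos : (0:ℝ) < ∑ i ∈ D S, x i := Finset.sum_pos (fun i _ => (hx i).1) hne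
    have hlt : ∑ i ∈ D S, x i < (D S).card := by
      calc ∑ i ∈ D S, x i < ∑ _i ∈ D S, (1:ℝ) :=
            Finset.sum_lt_sum_of_nonempty hne (fun i _ => (hx i).2)
        _ = (D S).card := by simp
    have hq1 : (1:ℝ) ≤ ∑ i ∈ D S, x i := by
      rw [hsum] at hpos ⊢
      have : (0:ℤ) < r S - ∑ C ∈ Ch, r C := by exact_mod_cast hpos
      exact_mod_cast this
    have : (1:ℝ) < (D S).card := lt_of_le_of_lt hq1 hlt
    exact_mod_cast Nat.one_lt_cast.mp (by exact_mod_cast this)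
  calc 2 * B.card = ∑ _S ∈ B, 2 := by rw [Finset.sum_const, smul_eq_mul, mul_comm]
    _ ≤ ∑ S ∈ B, (D S).card := Finset.sum_le_sum hcard
    _ = (B.biUnion D).card := (Finset.card_biUnion hdisj).symm
    _ ≤ Fintype.card (Fin n) := Finset.card_le_univ _
    _ = n := Fintype.card_fin n

/-- For a laminar family with integer requirements and a strictly fractional point,
the characteristic vectors of the tight sets span a subspace of dimension at most `n/2`. -/
theorem stmt_1 (n : ℕ) (L : Finset (Finset (Fin n)))
    (hlam : ∀ A ∈ L, ∀ B ∈ L, A ⊆ B ∨ B ⊆ A ∨ Disjoint A B)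
    (x : Fin n → ℝ) (hx : ∀ i, 0 < x i ∧ x i < 1)
    (r : Finset (Fin n) → ℤ) :
    2 * Module.finrank ℝ
      (Submodule.span ℝ
        ((fun T : Finset (Fin n) => fun i => if i ∈ T then (1 : ℝ) else 0) ''
          {T | T ∈ L ∧ ∑ i ∈ T, x i = (r T : ℝ)})) ≤ n := by
  classical
  set f : Finset (Fin n) → (Fin n → ℝ) := fun T => fun i => if i ∈ T then (1:ℝ) else 0 with hf
  have finj : Function.Injective f := by
    intro T T' h
    ext i
    have := congrFun h i
    simp only [hf] at this
    by_cases h1 : i ∈ T <;> by_cases h2 : i ∈ T' <;>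
      simp [h1, h2] at this ⊢
  set tight : Set (Finset (Fin n)) := {T | T ∈ L ∧ ∑ i ∈ T, x i = (r T : ℝ)} with htight
  obtain ⟨b, hbs, hspan, hli⟩ := exists_linearIndependent ℝ (f '' tight)
  have htfin : tight.Finite := Set.Finite.subset (L : Set (Finset (Fin n))).toFinite
    (fun T hT => hT.1)
  have hbfin : b.Finite := (htfin.image f).subset hbs
  have hAfin : (tight ∩ f ⁻¹' b).Finite := htfin.subset Set.inter_subset_left
  set B : Finset (Finset (Fin n)) := hAfin.toFinset with hB
  have hBmem : ∀ T, T ∈ B ↔ T ∈ tight ∧ f T ∈ b := by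
    intro T; rw [hB, Set.Finite.mem_toFinset]; exact Iff.rfl
  have hfB : f '' ↑B = b := by
    ext v
    constructor
    · rintro ⟨T, hT, rfl⟩
      exact ((hBmem T).mp (Finset.mem_coe.mp hT)).2
    · intro hv
      obtain ⟨T, hT, rfl⟩ := hbs hv
      exact ⟨T, Finset.mem_coe.mpr ((hBmem T).mpr ⟨hT, hv⟩), rfl⟩
  have hrank : Module.finrank ℝ (Submodule.span ℝ (f '' tight)) = B.card := by
    rw [← hspan]
    have : Fintype b := hbfin.fintype
    rw [finrank_span_set_eq_card hli]
    have himg : B.image f = b.toFinset := by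
      ext v
      rw [Set.mem_toFinset, ← hfB]
      simp
    rw [← himg, Finset.card_image_of_injective _ finj]
  rw [hrank]
  apply laminar_count n x hx r B
  · intro A hA C hC
    exact hlam A ((hBmem A).mp hA).1.1 C ((hBmem C).mp hC).1.1
  · intro S hS
    exact ((hBmem S).mp hS).1.2
  · intro S hS hmem
    have hfSb : f S ∈ b := ((hBmem S).mp hS).2
    have hSbtype : LinearIndependent ℝ (Subtype.val : b → (Fin n → ℝ)) := hli
    have hkey := hSbtype.notMem_span_image (s := {j : b | (j : Fin n → ℝ) ≠ f S})
      (x := ⟨f S, hfSb⟩) (by simp)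
    apply hkey
    have himg : (Subtype.val : b → (Fin n → ℝ)) '' {j : b | (j : Fin n → ℝ) ≠ f S}
        = b \ {f S} := by
      ext v
      simp only [Set.mem_image, Set.mem_setOf_eq, Set.mem_diff, Set.mem_singleton_iff]
      constructor
      · rintro ⟨⟨w, hw⟩, hne, rfl⟩; exact ⟨hw, hne⟩
      · rintro ⟨hv, hne⟩; exact ⟨⟨v, hv⟩, hne, rfl⟩
    rw [himg]
    have hsub : f '' ↑(B.erase S) ⊆ b \ {f S} := by
      rintro v ⟨T, hT, rfl⟩
      simp only [Finset.coe_erase, Set.mem_diff, Finset.mem_coe,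
        Set.mem_singleton_iff] at hT
      exact ⟨((hBmem T).mp hT.1).2, fun h => hT.2 (finj h)⟩
    exact Submodule.span_mono hsub hmem
end

section
/- Let K₀ ≥ 1. There exists a constant K₁ (e.g. K₁ = 64·K₀·4) such that for all positive integers f, Δ, and any subsets S₁,…,S_m of a ground set with each element of [f] appearing in at most Δ of the sets (so Σ_j |S_j ∩ [f]| ≤ Δf), setting λ_j = √(K₁Δ/|S_j|) gives Σ_{j=1}^m exp(-λ_j²/K₀) ≤ f/48. -/
open Finset

/-- There is a constant `K₁` such that setting `λ_j = √(K₁Δ/|S_j|)` gives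
`Σ_j exp(-λ_j²/K₀) ≤ f/48` whenever each element appears in at most `Δ` of the sets. -/
theorem stmt_7 (K₀ : ℝ) (hK₀ : 1 ≤ K₀) :
    ∃ K₁ : ℝ, 0 < K₁ ∧
      ∀ (f Δ m : ℕ), 0 < f → 0 < Δ →
        ∀ S : Fin m → Finset (Fin f), (∀ j, (S j).Nonempty) →
          (∑ j, (S j).card ≤ Δ * f) →
          (∑ j, Real.exp (-(Real.sqrt (K₁ * Δ / ((S j).card : ℝ))) ^ 2 / K₀))
            ≤ (f : ℝ) / 48 := by
  have hK : (0:ℝ) < K₀ := lt_of_lt_of_le one_pos hK₀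
  refine ⟨48 * K₀, by positivity, ?_⟩
  intro f Δ m hf hΔ S hS hsum
  have hΔ' : (0:ℝ) < Δ := by exact_mod_cast hΔ
  have key : ∀ j, Real.exp (-(Real.sqrt (48 * K₀ * Δ / ((S j).card : ℝ))) ^ 2 / K₀)
      ≤ ((S j).card : ℝ) / (48 * Δ) := by
    intro j
    have hc : (0:ℝ) < (S j).card := by exact_mod_cast (hS j).card_pos
    have hx : (0:ℝ) ≤ 48 * K₀ * Δ / ((S j).card : ℝ) := by positivity
    rw [Real.sq_sqrt hx]
    have heq : -(48 * K₀ * Δ / ((S j).card : ℝ)) / K₀ = -(48 * Δ / ((S j).card : ℝ)) := by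
      field_simp
    rw [heq]
    have hpos : (0:ℝ) < 48 * Δ / ((S j).card : ℝ) := by positivity
    have h1 : 48 * Δ / ((S j).card : ℝ) ≤ Real.exp (48 * Δ / ((S j).card : ℝ)) :=
      (Real.add_one_le_exp _).trans' (by linarith)
    have h2 : Real.exp (-(48 * Δ / ((S j).card : ℝ)))
        ≤ (48 * Δ / ((S j).card : ℝ))⁻¹ := by
      rw [Real.exp_neg]
      exact inv_anti₀ hpos h1
    calc Real.exp (-(48 * Δ / ((S j).card : ℝ))) ≤ (48 * Δ / ((S j).card : ℝ))⁻¹ := h2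
      _ = ((S j).card : ℝ) / (48 * Δ) := by field_simp
  calc (∑ j, Real.exp (-(Real.sqrt (48 * K₀ * Δ / ((S j).card : ℝ))) ^ 2 / K₀))
      ≤ ∑ j, ((S j).card : ℝ) / (48 * Δ) := Finset.sum_le_sum fun j _ => key j
    _ = (∑ j, ((S j).card : ℝ)) / (48 * Δ) := by rw [Finset.sum_div]
    _ ≤ ((Δ : ℝ) * f) / (48 * Δ) := by
        apply div_le_div_of_nonneg_right ?_ (by positivity)
        exact_mod_cast hsum
    _ = (f : ℝ) / 48 := by field_simp
end

section
/- Let Q ⊆ ℝ^n be a polyhedron, and for t = 0,1,…,T let X_t ∈ Q be points such that X_{t+1} lies on the segment [X_t, Y_t] for some Y_t with Y_t - X_t in the subspace V_t orthogonal to all constraints of Q tight at X_t. Suppose that whenever Y_t ∉ Q ('truncation'), X_{t+1} is the point of [X_t, Y_t] ∩ Q closest to Y_t. Then the number of indices t at which truncation occurs is at most n. -/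
open Finset

private lemma sum_line {n m : ℕ} (A : Fin m → Fin n → ℝ) (Xt Yt : Fin n → ℝ) (u : ℝ)
    (j : Fin m) :
    ∑ i, A j i * (Xt i + u * (Yt i - Xt i))
      = (∑ i, A j i * Xt i) + u * ∑ i, A j i * (Yt i - Xt i) := by
  rw [Finset.mul_sum, ← Finset.sum_add_distrib]
  exact Finset.sum_congr rfl fun i _ => by ring

private def dotL {n : ℕ} (w : Fin n → ℝ) : (Fin n → ℝ) →ₗ[ℝ] ℝ where
  toFun v := ∑ i, v i * w i
  map_add' x y := by simp [add_mul, Finset.sum_add_distrib]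
  map_smul' r x := by simp [Finset.mul_sum, mul_assoc]

private lemma exists_tight {n m : ℕ} (A : Fin m → Fin n → ℝ) (β : Fin m → ℝ)
    (Xt Yt Xs : Fin n → ℝ)
    (hXsQ : ∀ j, ∑ i, A j i * Xs i ≤ β j)
    (hseg : Xs ∈ segment ℝ Xt Yt)
    (hY : ¬ ∀ j, ∑ i, A j i * Yt i ≤ β j)
    (htr : ∀ z ∈ segment ℝ Xt Yt, (∀ j, ∑ i, A j i * z i ≤ β j) →
      dist Xs Yt ≤ dist z Yt)
    (hXne : Xt ≠ Yt) :
    ∃ j, (∑ i, A j i * Xs i) = β j ∧ 0 < ∑ i, A j i * (Yt i - Xt i) := by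
  classical
  rw [segment_eq_image'] at hseg
  obtain ⟨s, ⟨hs0, hs1⟩, hXs⟩ := hseg
  have hXseq : Xs = Xt + s • (Yt - Xt) := hXs.symm
  set f : Fin m → ℝ := fun j => ∑ i, A j i * (Yt i - Xt i) with hf
  set c : Fin m → ℝ := fun j => ∑ i, A j i * Xt i with hc
  have hXs' : ∀ j, (∑ i, A j i * Xs i) = c j + s * f j := by
    intro j
    rw [hXseq]
    have heq : ∀ i, (Xt + s • (Yt - Xt)) i = Xt i + s * (Yt i - Xt i) := by
      intro i; simp
    rw [Finset.sum_congr rfl fun i _ => by rw [heq i]]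
    exact sum_line A Xt Yt s j
  have hYval : ∀ j, (∑ i, A j i * Yt i) = c j + f j := by
    intro j
    rw [hc, hf, ← Finset.sum_add_distrib]
    exact Finset.sum_congr rfl fun i _ => by ring
  have hs1' : s < 1 := by
    rcases lt_or_eq_of_le hs1 with h | h
    · exact h
    · exfalso
      apply hY
      intro j
      have hXsYt : Xs = Yt := by
        funext i; rw [hXseq, h]; simp
      rw [← hXsYt]
      exact hXsQ j
  by_contra hcon
  push_neg at hcon
  obtain ⟨j0, hj0⟩ := not_forall.mp hY
  push_neg at hj0
  rw [hYval j0] at hj0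
  have hfj0 : 0 < f j0 := by
    have h1 : c j0 + s * f j0 ≤ β j0 := by rw [← hXs' j0]; exact hXsQ j0
    nlinarith
  set S : Finset (Fin m) := Finset.univ.filter (fun j => 0 < f j) with hS
  have hSne : S.Nonempty := ⟨j0, by simp [hS, hfj0]⟩
  have hstrict : ∀ j ∈ S, c j + s * f j < β j := by
    intro j hj
    have hfj : 0 < f j := (Finset.mem_filter.mp hj).2
    have hle : c j + s * f j ≤ β j := by rw [← hXs' j]; exact hXsQ j
    rcases lt_or_eq_of_le hle with h | h
    · exact h
    · have h2 : f j ≤ 0 := hcon j (by rw [hXs' j]; exact h)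
      linarith
  set ε : ℝ := S.inf' hSne (fun j => (β j - (c j + s * f j)) / f j) with hεdef
  have hε : 0 < ε := by
    rw [hεdef, Finset.lt_inf'_iff]
    intro j hj
    exact div_pos (by linarith [hstrict j hj]) (Finset.mem_filter.mp hj).2
  set δ : ℝ := min ε (1 - s) with hδdef
  have hδ : 0 < δ := lt_min hε (by linarith)
  set u : ℝ := s + δ with hu
  have hu1 : u ≤ 1 := by
    have : δ ≤ 1 - s := min_le_right _ _
    rw [hu]; linarith
  have hu0 : 0 ≤ u := by rw [hu]; linarith
  set z : Fin n → ℝ := Xt + u • (Yt - Xt) with hz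
  have hzseg : z ∈ segment ℝ Xt Yt := by
    rw [segment_eq_image']
    exact ⟨u, ⟨hu0, hu1⟩, rfl⟩
  have hzval : ∀ j, (∑ i, A j i * z i) = c j + u * f j := by
    intro j
    have : ∀ i, z i = Xt i + u * (Yt i - Xt i) := by intro i; simp [hz]
    rw [Finset.sum_congr rfl fun i _ => by rw [this i]]
    exact sum_line A Xt Yt u j
  have hzQ : ∀ j, ∑ i, A j i * z i ≤ β j := by
    intro j
    rw [hzval j]
    rcases le_or_gt (f j) 0 with h | h
    · have h1 : c j + s * f j ≤ β j := by rw [← hXs' j]; exact hXsQ j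
      nlinarith
    · have hjS : j ∈ S := Finset.mem_filter.mpr ⟨Finset.mem_univ j, h⟩
      have h2 : ε ≤ (β j - (c j + s * f j)) / f j := Finset.inf'_le _ hjS
      have h3 : δ ≤ ε := min_le_left _ _
      have h4 : ε * f j ≤ β j - (c j + s * f j) := by
        rw [← le_div_iff₀ h]; exact h2
      have h5 : δ * f j ≤ ε * f j := mul_le_mul_of_nonneg_right h3 h.le
      have : u * f j = s * f j + δ * f j := by rw [hu]; ring
      linarith
  have hd := htr z hzseg hzQ
  have hXsY : Xs - Yt = (1 - s) • (Xt - Yt) := by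
    rw [hXseq]; funext i; simp; ring
  have hzY : z - Yt = (1 - u) • (Xt - Yt) := by
    rw [hz]; funext i; simp; ring
  have hnorm : 0 < ‖Xt - Yt‖ := by
    rw [norm_pos_iff]; exact sub_ne_zero.mpr hXne
  rw [dist_eq_norm, dist_eq_norm, hXsY, hzY, norm_smul, norm_smul,
    Real.norm_eq_abs, Real.norm_eq_abs,
    abs_of_nonneg (by linarith : (0:ℝ) ≤ 1 - s),
    abs_of_nonneg (by linarith : (0:ℝ) ≤ 1 - u)] at hd
  have : 1 - u < 1 - s := by rw [hu]; linarith
  nlinarith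

private lemma count_aux (d : ℕ → ℕ) (P : ℕ → Prop) [DecidablePred P] :
    ∀ T : ℕ, (∀ t < T, d t ≤ d (t+1)) → (∀ t < T, P t → d t + 1 ≤ d (t+1)) →
      d 0 + ((Finset.range T).filter P).card ≤ d T := by
  intro T
  induction T with
  | zero => simp
  | succ T ih =>
    intro hmono hstep
    have h1 := ih (fun t ht => hmono t (ht.trans (Nat.lt_succ_self T)))
      (fun t ht => hstep t (ht.trans (Nat.lt_succ_self T)))
    rw [Finset.range_add_one, Finset.filter_insert]
    by_cases hP : P T
    · rw [if_pos hP, Finset.card_insert_of_notMem (by simp)]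
      have := hstep T (Nat.lt_succ_self T) hP
      omega
    · rw [if_neg hP]
      have := hmono T (Nat.lt_succ_self T)
      omega

/-- In the constrained random walk inside a polyhedron `Q`, where each step moves
orthogonally to all tight constraints and a truncated step goes to the point of
`[X_t, Y_t] ∩ Q` closest to `Y_t`, truncation occurs at most `n` times. -/
theorem stmt_10 (n m T : ℕ) (A : Fin m → Fin n → ℝ) (β : Fin m → ℝ)
    (Q : Set (Fin n → ℝ)) (hQ : Q = {x | ∀ j, ∑ i, A j i * x i ≤ β j})
    (X Y : ℕ → Fin n → ℝ)
    (hXQ : ∀ t ≤ T, X t ∈ Q)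
    (hseg : ∀ t < T, X (t + 1) ∈ segment ℝ (X t) (Y t))
    (horth : ∀ t < T, ∀ j, (∑ i, A j i * X t i) = β j →
      (∑ i, A j i * (Y t i - X t i)) = 0)
    (htrunc : ∀ t < T, Y t ∉ Q →
      ∀ z ∈ segment ℝ (X t) (Y t), z ∈ Q → dist (X (t + 1)) (Y t) ≤ dist z (Y t)) :
    Set.ncard {t | t < T ∧ Y t ∉ Q} ≤ n := by
  classical
  subst hQ
  set tight : ℕ → Set (Fin m) := fun t => {j | (∑ i, A j i * X t i) = β j} with htight
  set E : ℕ → Submodule ℝ (Fin n → ℝ) := fun t => Submodule.span ℝ (A '' tight t) with hE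
  set d : ℕ → ℕ := fun t => Module.finrank ℝ (E t) with hd
  -- tight sets are monotone
  have htmono : ∀ t < T, tight t ⊆ tight (t + 1) := by
    intro t ht j hj
    have hseg' := hseg t ht
    rw [segment_eq_image'] at hseg'
    obtain ⟨s, _, hXs⟩ := hseg'
    have hXseq : X (t+1) = X t + s • (Y t - X t) := hXs.symm
    have hval : (∑ i, A j i * X (t+1) i)
        = (∑ i, A j i * X t i) + s * ∑ i, A j i * (Y t i - X t i) := by
      rw [hXseq]
      have heq : ∀ i, (X t + s • (Y t - X t)) i = X t i + s * (Y t i - X t i) := by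
        intro i; simp
      rw [Finset.sum_congr rfl fun i _ => by rw [heq i]]
      exact sum_line A (X t) (Y t) s j
    have hjt : (∑ i, A j i * X t i) = β j := hj
    show (∑ i, A j i * X (t+1) i) = β j
    rw [hval, hjt, horth t ht j hjt, mul_zero, add_zero]
  have hEmono : ∀ t < T, E t ≤ E (t + 1) := fun t ht =>
    Submodule.span_mono (Set.image_mono (htmono t ht))
  have hdmono : ∀ t < T, d t ≤ d (t + 1) := fun t ht =>
    Submodule.finrank_mono (hEmono t ht)
  -- strict increase at truncation steps
  have hdstep : ∀ t < T, (Y t ∉ {x | ∀ j, ∑ i, A j i * x i ≤ β j}) → d t + 1 ≤ d (t + 1) := by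
    intro t ht hYt
    have hYt' : ¬ ∀ j, ∑ i, A j i * Y t i ≤ β j := hYt
    have hXne : X t ≠ Y t := by
      intro h
      exact hYt (h ▸ hXQ t ht.le)
    obtain ⟨j0, hj0tight, hj0pos⟩ := exists_tight A β (X t) (Y t) (X (t+1))
      (hXQ (t+1) ht) (hseg t ht) hYt'
      (fun z hz hzQ => htrunc t ht hYt z hz hzQ) hXne
    have hmem : A j0 ∈ E (t + 1) := Submodule.subset_span ⟨j0, hj0tight, rfl⟩
    have hnot : A j0 ∉ E t := by
      intro hmem'
      have hker : E t ≤ LinearMap.ker (dotL (fun i => Y t i - X t i)) := by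
        rw [hE]
        apply Submodule.span_le.mpr
        rintro _ ⟨j, hj, rfl⟩
        simp only [SetLike.mem_coe, LinearMap.mem_ker, dotL, LinearMap.coe_mk, AddHom.coe_mk]
        exact horth t ht j hj
      have := hker hmem'
      rw [LinearMap.mem_ker] at this
      simp only [dotL, LinearMap.coe_mk, AddHom.coe_mk] at this
      rw [this] at hj0pos
      exact lt_irrefl 0 hj0pos
    have hlt : E t < E (t + 1) :=
      lt_of_le_of_ne (hEmono t ht) (fun h => hnot (h.symm ▸ hmem))
    exact Submodule.finrank_lt_finrank_of_lt hlt
  have hbound : d T ≤ n := by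
    have h1 : d T ≤ Module.finrank ℝ (Fin n → ℝ) := Submodule.finrank_le (E T)
    rwa [Module.finrank_fin_fun] at h1
  have hset : {t | t < T ∧ Y t ∉ {x | ∀ j, ∑ i, A j i * x i ≤ β j}}
      = ↑((Finset.range T).filter fun t => Y t ∉ {x | ∀ j, ∑ i, A j i * x i ≤ β j}) := by
    ext t
    simp [Finset.mem_filter, Finset.mem_range]
  rw [hset, Set.ncard_coe_finset]
  have hc := count_aux d (fun t => Y t ∉ {x | ∀ j, ∑ i, A j i * x i ≤ β j}) T hdmono hdstep
  exact le_trans (le_trans (Nat.le_add_left _ _) hc) hbound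
end
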